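/- Let φ ∈ N′, x ∈ φ, and let φ₁ ⊆ φ₂ ⊆ ⋯ be an increasing sequence of elements of N′ with ⋃_{n≥1} φ_n = φ. Then there exists n₀ ≥ 1 such that for all n ≥ n₀ one has x ∈ φ_n and h_c(φ_n, x) = h_c(φ, x). -/

import Mathlib

noncomputable section

namespace Lilypond

open scoped ENNReal

/-- Marked points: a spatial position in `ℝ² = ℝ × ℝ` (with the supremum norm)
together with a mark, which is a direction vector in `ℝ²`. -/
abbrev Pt : Type := (ℝ × ℝ) × (ℝ × ℝ)

def e1 : ℝ × ℝ := (1, 0)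
def e2 : ℝ × ℝ := (0, 1)

/-- The mark space `M = {e₁, −e₁, e₂, −e₂}`. -/
def Mset : Set (ℝ × ℝ) := {e1, -e1, e2, -e2}

/-- The Euclidean norm on `ℝ²` (the norm of `ℝ × ℝ` itself is the sup-norm `|·|_∞`). -/
def eNorm (p : ℝ × ℝ) : ℝ := Real.sqrt (p.1 ^ 2 + p.2 ^ 2)

/-- The eight forbidden directions `{±e₁, ±e₂, (±e₁ ± e₂)/√2}`. -/
def badDirs : Set (ℝ × ℝ) :=
  {e1, -e1, e2, -e2, (Real.sqrt 2)⁻¹ • (e1 + e2), (Real.sqrt 2)⁻¹ • (e1 - e2),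
    (Real.sqrt 2)⁻¹ • (-e1 + e2), (Real.sqrt 2)⁻¹ • (-e1 - e2)}

/-- The set of spatial positions of a marked configuration. -/
def pos (φ : Set Pt) : Set (ℝ × ℝ) := Prod.fst '' φ

/-- `A` contains an (infinite) anisotropic descending chain: there are `b > 0` and pairwise
distinct points `ξ₀, ξ₁, ξ₂, …` of `A` with `|ξ₀ − ξ₁|_∞ ≤ b` and
`|ξ_{i+1} − ξ_i|_∞ < |ξ_i − ξ_{i−1}|_∞` for all `i ≥ 1`. -/
def HasInfDescChain (A : Set (ℝ × ℝ)) : Prop :=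
  ∃ b > (0 : ℝ), ∃ ξ : ℕ → ℝ × ℝ, Function.Injective ξ ∧ (∀ i, ξ i ∈ A) ∧
    ‖ξ 0 - ξ 1‖ ≤ b ∧ ∀ i, 1 ≤ i → ‖ξ (i + 1) - ξ i‖ < ‖ξ i - ξ (i - 1)‖

/-- Local finiteness of a marked configuration. -/
def LocFin (φ : Set Pt) : Prop := ∀ r : ℝ, {x ∈ φ | ‖x.1‖ ≤ r}.Finite

/-- A marked set `φ ⊂ ℝ² × M` is admissible: it is locally finite, all marks lie in `M`,
its set of spatial positions contains no anisotropic descending chain, and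
`(ξ − η)/|ξ − η| ∉ {±e₁, ±e₂, (±e₁ ± e₂)/√2}` (Euclidean normalization) for all distinct
`x = (ξ,v), y = (η,w) ∈ φ`. -/
def Admissible (φ : Set Pt) : Prop :=
  LocFin φ ∧ (∀ x ∈ φ, x.2 ∈ Mset) ∧ ¬ HasInfDescChain (pos φ) ∧
    ∀ x ∈ φ, ∀ y ∈ φ, x ≠ y → (eNorm (x.1 - y.1))⁻¹ • (x.1 - y.1) ∉ badDirs

/-- The half-open growth segment `[ξ, ξ + l·v)`, interpreted as the full ray
`ξ + [0,∞)·v` when `l = ∞`. -/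
def seg (ξ v : ℝ × ℝ) (l : ℝ≥0∞) : Set (ℝ × ℝ) :=
  {p | ∃ t : ℝ, 0 ≤ t ∧ ENNReal.ofReal t < l ∧ p = ξ + t • v}

/-- The tip `ξ + f(x)·v` of the (finite) segment grown from `x = (ξ, v)`. -/
def tip (f : Pt → ℝ≥0∞) (x : Pt) : ℝ × ℝ := x.1 + (f x).toReal • x.2

/-- `y = (η, w)` is a stopping neighbor of `x = (ξ, v)` in `φ` (w.r.t. the growth
function `f`): `y ∈ φ`, `ξ + f(x)v ∈ [η, η + f(y)w)` and `|ξ + f(x)v − η| < f(x)`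
(Euclidean norm). -/
def IsStopNbr (φ : Set Pt) (f : Pt → ℝ≥0∞) (x y : Pt) : Prop :=
  y ∈ φ ∧ tip f x ∈ seg y.1 y.2 (f y) ∧ eNorm (tip f x - y.1) < (f x).toReal

/-- `f` is a growth function for `φ`: the half-open segments `[ξ, ξ + f(x)v)` are pairwise
disjoint (hard-core property), every `x ∈ φ` with `f(x) < ∞` has a unique stopping
neighbor, and (as a normalization identifying `f` with a function on `φ`) `f` vanishes
off `φ`. -/
def IsGrowthFn (φ : Set Pt) (f : Pt → ℝ≥0∞) : Prop :=
  (∀ x ∈ φ, ∀ y ∈ φ, x ≠ y → seg x.1 x.2 (f x) ∩ seg y.1 y.2 (f y) = ∅) ∧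
  (∀ x ∈ φ, f x ≠ ⊤ → ∃! y, IsStopNbr φ f x y) ∧
  (∀ x, x ∉ φ → f x = 0)

open Classical in
/-- The growth function `f_φ` of a configuration (chosen by choice; it is unique on
admissible configurations). -/
def growthFn (φ : Set Pt) : Pt → ℝ≥0∞ :=
  if h : ∃ f, IsGrowthFn φ f then h.choose else fun _ => 0

/-- `N′`: nonempty admissible configurations possessing a growth function which is
finite everywhere on the configuration. -/
def Nprime (φ : Set Pt) : Prop :=
  φ.Nonempty ∧ Admissible φ ∧ (∃ f, IsGrowthFn φ f) ∧ ∀ x ∈ φ, growthFn φ x ≠ ⊤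

open Classical in
/-- The combinatorial descendant `h_c(φ, x)`: the (unique) stopping neighbor of `x`
in `φ`. -/
def hc (φ : Set Pt) (x : Pt) : Pt :=
  if h : ∃ y, IsStopNbr φ (growthFn φ) x y then h.choose else x

/-- The geometric descendant `h_g(φ, x) = ξ + f_φ(x)·v`. -/
def hg (φ : Set Pt) (x : Pt) : ℝ × ℝ := tip (growthFn φ) x

/-- The closed segment `I(φ, x) = [ξ, h_g(φ, x)]`. -/
def I (φ : Set Pt) (x : Pt) : Set (ℝ × ℝ) := segment ℝ x.1 (hg φ x)

/-!
Suppose the growth value of a point `p ∈ φ` in `φₙ` differs from its value in `φ` for infinitely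
many `n`. Take the configuration in which `p`'s segment is shorter, of length `c`; it stops on a
segment of some `q` at a parameter `t < c`. Admissibility forces the marks of `p` and `q` to be
perpendicular, so `|p - q|_∞ = c`, and in the other configuration the longer segment of `p`
passes through the stopping point, so by disjointness `q`'s segment there has length at most `t`.
Thus `q` is again a point with differing growth values, with a strictly smaller minimum of the
two. Local finiteness lets one fix `q` along an infinite set of indices, and iterating yields an
anisotropic descending chain in `φ`, which admissibility excludes. So growth values stabilize,
and with them the stopping neighbour of `x`.
-/

open Filter

lemma ne_zero_of_mem_Mset {v : ℝ × ℝ} (hv : v ∈ Mset) : v ≠ 0 := by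
  rcases hv with rfl | rfl | rfl | rfl <;> simp [e1, e2, Prod.ext_iff]

lemma neg_mem_Mset {v : ℝ × ℝ} (hv : v ∈ Mset) : -v ∈ Mset := by
  rcases hv with rfl | rfl | rfl | rfl <;> simp [Mset]

lemma Mset_subset_badDirs : Mset ⊆ badDirs := by
  rintro v (rfl | rfl | rfl | rfl) <;> simp [badDirs]

lemma eNorm_smul_of_mem_Mset {v : ℝ × ℝ} (hv : v ∈ Mset) (t : ℝ) : eNorm (t • v) = |t| := by
  rcases hv with rfl | rfl | rfl | rfl <;> simp [eNorm, e1, e2, Real.sqrt_sq_eq_abs]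

lemma smul_mem_badDirs {v : ℝ × ℝ} (hv : v ∈ Mset) {a : ℝ} (ha : a ≠ 0) :
    (eNorm (a • v))⁻¹ • (a • v) ∈ badDirs := by
  rw [eNorm_smul_of_mem_Mset hv, smul_smul]
  rcases ha.lt_or_gt with ha | ha
  · rw [abs_of_neg ha, inv_neg, neg_mul, inv_mul_cancel₀ ha.ne, neg_one_smul]
    exact Mset_subset_badDirs (neg_mem_Mset hv)
  · rw [abs_of_pos ha, inv_mul_cancel₀ ha.ne', one_smul]
    exact Mset_subset_badDirs hv

lemma Mset_parallel_or_perp {v w : ℝ × ℝ} (hv : v ∈ Mset) (hw : w ∈ Mset) :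
    w = v ∨ w = -v ∨ ∀ a b : ℝ, ‖a • v + b • w‖ = max |a| |b| := by
  rcases hv with rfl | rfl | rfl | rfl <;> rcases hw with rfl | rfl | rfl | rfl <;>
    simp [e1, e2, Prod.ext_iff, Prod.norm_def, max_comm]

lemma norm_fst_sub_fst_eq_of_add_smul_eq {φ : Set Pt} (hφ : Admissible φ) {z y : Pt}
    (hz : z ∈ φ) (hy : y ∈ φ) (hne : z ≠ y) {c t : ℝ} (ht0 : 0 ≤ t) (htc : t < c)
    (heq : z.1 + c • z.2 = y.1 + t • y.2) : ‖z.1 - y.1‖ = c := by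
  obtain ⟨-, hmark, -, hdir⟩ := hφ
  have hdiff : z.1 - y.1 = (-c) • z.2 + t • y.2 := by
    linear_combination (norm := module) heq
  have hbad : ∀ a ≠ (0 : ℝ), z.1 - y.1 = a • z.2 → False := fun a ha h =>
    hdir z hz y hy hne (h ▸ smul_mem_badDirs (hmark z hz) ha)
  rcases Mset_parallel_or_perp (hmark z hz) (hmark y hy) with h | h | h
  · exact (hbad (t - c) (by linarith) (by rw [hdiff, h, ← add_smul]; ring_nf)).elim
  · refine (hbad (-t - c) (by linarith) ?_).elim
    rw [hdiff, h, smul_neg, ← neg_smul, ← add_smul]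
    ring_nf
  · rw [hdiff, h, abs_neg, abs_of_nonneg ht0, abs_of_pos (ht0.trans_lt htc)]
    exact max_eq_left htc.le

lemma self_mem_seg {ξ v : ℝ × ℝ} {l : ℝ≥0∞} (hl : 0 < l) : ξ ∈ seg ξ v l :=
  ⟨0, le_rfl, by simpa using hl, by simp⟩

lemma IsStopNbr.congr {φ ψ : Set Pt} {f g : Pt → ℝ≥0∞} {x y : Pt} (h : IsStopNbr φ f x y)
    (hy : y ∈ ψ) (hgx : g x = f x) (hgy : g y = f y) : IsStopNbr ψ g x y := by
  obtain ⟨-, hseg, hdist⟩ := h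
  have htip : tip g x = tip f x := by rw [tip, tip, hgx]
  exact ⟨hy, by rwa [htip, hgy], by rwa [htip, hgx]⟩

namespace Nprime

variable {ψ : Set Pt} (hψ : Nprime ψ) {z y : Pt}
include hψ

lemma isGrowthFn : IsGrowthFn ψ (growthFn ψ) := by
  rw [growthFn, dif_pos hψ.2.2.1]
  exact hψ.2.2.1.choose_spec

lemma existsUnique_isStopNbr (hz : z ∈ ψ) : ∃! y, IsStopNbr ψ (growthFn ψ) z y :=
  hψ.isGrowthFn.2.1 z hz (hψ.2.2.2 z hz)

lemma isStopNbr_hc (hz : z ∈ ψ) : IsStopNbr ψ (growthFn ψ) z (hc ψ z) := by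
  have hex := (hψ.existsUnique_isStopNbr hz).exists
  rw [hc, dif_pos hex]
  exact hex.choose_spec

lemma hc_eq_of_isStopNbr (hz : z ∈ ψ) (hy : IsStopNbr ψ (growthFn ψ) z y) : hc ψ z = y :=
  (hψ.existsUnique_isStopNbr hz).unique (hψ.isStopNbr_hc hz) hy

lemma growthFn_pos (hz : z ∈ ψ) : 0 < growthFn ψ z := by
  obtain ⟨-, -, hdist⟩ := hψ.isStopNbr_hc hz
  exact (ENNReal.toReal_pos_iff.mp ((Real.sqrt_nonneg _).trans_lt hdist)).1

lemma injOn_fst : Set.InjOn Prod.fst ψ := by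
  intro z hz y hy hzy
  by_contra hne
  refine (Set.eq_empty_iff_forall_notMem.mp (hψ.isGrowthFn.1 z hz y hy hne)) z.1 ⟨?_, ?_⟩
  · exact self_mem_seg (hψ.growthFn_pos hz)
  · exact hzy ▸ self_mem_seg (hψ.growthFn_pos hy)

lemma ne_and_exists_param_of_isStopNbr (hz : z ∈ ψ) (hy : IsStopNbr ψ (growthFn ψ) z y) :
    z ≠ y ∧ ∃ t : ℝ, 0 ≤ t ∧ t < (growthFn ψ z).toReal ∧ ENNReal.ofReal t < growthFn ψ y ∧
      tip (growthFn ψ) z = y.1 + t • y.2 := by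
  obtain ⟨-, ⟨-, hmark, -, -⟩, -, -⟩ := hψ
  obtain ⟨hyψ, ⟨t, ht0, hty, htip⟩, hdist⟩ := hy
  have htc : t < (growthFn ψ z).toReal := by
    rwa [htip, add_sub_cancel_left, eNorm_smul_of_mem_Mset (hmark y hyψ),
      abs_of_nonneg ht0] at hdist
  refine ⟨fun hzy => ?_, t, ht0, htc, hty, htip⟩
  subst hzy
  have : ((growthFn ψ z).toReal - t) • z.2 = 0 := by
    rw [sub_smul, sub_eq_zero]; exact add_left_cancel htip
  rcases smul_eq_zero.mp this with h | h
  · linarith [sub_eq_zero.mp h]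
  · exact ne_zero_of_mem_Mset (hmark z hz) h

end Nprime

def minGrowth (ψ χ : Set Pt) (p : Pt) : ℝ := (min (growthFn ψ p) (growthFn χ p)).toReal

lemma minGrowth_comm (ψ χ : Set Pt) (p : Pt) : minGrowth ψ χ p = minGrowth χ ψ p := by
  rw [minGrowth, minGrowth, min_comm]

lemma Nprime.minGrowth_stopNbr_lt {ψ χ : Set Pt} (hψ : Nprime ψ) (hχ : Nprime χ) {p y : Pt}
    (hp : p ∈ ψ) (hpχ : p ∈ χ) (hyχ : y ∈ χ) (hy : IsStopNbr ψ (growthFn ψ) p y)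
    (hlt : growthFn ψ p < growthFn χ p) :
    growthFn χ y < growthFn ψ y ∧ ‖p.1 - y.1‖ = minGrowth ψ χ p ∧
      minGrowth ψ χ y < minGrowth ψ χ p := by
  obtain ⟨hne, t, ht0, htc, hty, htip⟩ := hψ.ne_and_exists_param_of_isStopNbr hp hy
  have hχy : growthFn χ y ≤ ENNReal.ofReal t := by
    by_contra! h
    -- the stopping point would lie on `p`'s longer segment in `χ` and on `y`'s segment
    refine (Set.eq_empty_iff_forall_notMem.mp (hχ.isGrowthFn.1 p hpχ y hyχ hne)) _
      ⟨⟨_, ENNReal.toReal_nonneg, ?_, rfl⟩, ⟨t, ht0, h, htip⟩⟩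
    rwa [ENNReal.ofReal_toReal (hψ.2.2.2 p hp)]
  have hχψ : growthFn χ y < growthFn ψ y := hχy.trans_lt hty
  have hmin_p : minGrowth ψ χ p = (growthFn ψ p).toReal := by rw [minGrowth, min_eq_left hlt.le]
  have hmin_y : minGrowth ψ χ y = (growthFn χ y).toReal := by
    rw [minGrowth, min_eq_right hχψ.le]
  refine ⟨hχψ, ?_, ?_⟩
  · rw [hmin_p]
    exact norm_fst_sub_fst_eq_of_add_smul_eq hψ.2.1 hp hy.1 hne ht0 htc htip
  · rw [hmin_p, hmin_y]
    exact (ENNReal.toReal_le_of_le_ofReal ht0 hχy).trans_lt htc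

lemma hasInfDescChain_pos_of_nested_scales {φ : Set Pt} (hinj : Set.InjOn Prod.fst φ)
    {p : ℕ → Pt} (hp : ∀ i, p i ∈ φ) {S : ℕ → Set ℕ} (hS : ∀ i, (S i).Nonempty) {σ : ℕ → Pt → ℝ}
    (hstep : ∀ i, S (i + 1) ⊆ S i ∧ ∀ n ∈ S (i + 1),
      ‖(p i).1 - (p (i + 1)).1‖ = σ n (p i) ∧ σ n (p (i + 1)) < σ n (p i)) :
    HasInfDescChain (pos φ) := by
  have hanti : Antitone S := antitone_nat_of_succ_le fun i => (hstep i).1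
  have hinj' : Function.Injective fun i => (p i).1 := by
    refine .of_lt_imp_ne fun i j hij hpij => ?_
    obtain ⟨n, hn⟩ := hS j
    have hdec : StrictAntiOn (fun m => σ n (p m)) (Set.Iic j) :=
      strictAntiOn_Iic_of_succ_lt fun m hm =>
        ((hstep m).2 n (hanti (Order.succ_le_of_lt hm) hn)).2
    exact (hdec (Set.mem_Iic.2 hij.le) (Set.mem_Iic.2 le_rfl) hij).ne'
      (congrArg (σ n) (hinj (hp i) (hp j) hpij))
  refine ⟨‖(p 0).1 - (p 1).1‖ + 1, by positivity, fun i => (p i).1, hinj',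
    fun i => ⟨p i, hp i, rfl⟩, by linarith, ?_⟩
  rintro (_ | i) hi
  · omega
  obtain ⟨n, hn⟩ := hS (i + 2)
  have h₁ := (hstep (i + 1)).2 n hn
  have h₂ := (hstep i).2 n ((hstep (i + 1)).1 hn)
  simp only [Nat.add_sub_cancel]
  rw [norm_sub_rev, h₁.1, norm_sub_rev, h₂.1]
  exact h₂.2

lemma eventually_mem_of_mem_iUnion {α ι : Type*} [Preorder ι] {s : ι → Set α}
    (hs : Monotone s) {a : α} (ha : a ∈ ⋃ i, s i) : ∀ᶠ i in atTop, a ∈ s i := by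
  obtain ⟨k, hk⟩ := Set.mem_iUnion.mp ha
  exact (eventually_ge_atTop k).mono fun i hi => hs hi hk

section Approximation

variable {φ : Set Pt} {φs : ℕ → Set Pt}

def GrowthDiffers (φ : Set Pt) (φs : ℕ → Set Pt) (p : Pt) (S : Set ℕ) : Prop :=
  p ∈ φ ∧ (∃ᶠ n in atTop, n ∈ S) ∧ ∀ n ∈ S, p ∈ φs n ∧ growthFn (φs n) p ≠ growthFn φ p

lemma exists_growthDiffers_of_frequently_lt (hφ : Nprime φ) (hN : ∀ n, Nprime (φs n))
    (hsub : ∀ n, φs n ⊆ φ) {p : Pt} (hp : p ∈ φ) {S : Set ℕ} (hS : ∃ᶠ n in atTop, n ∈ S)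
    (hpS : ∀ n ∈ S, p ∈ φs n ∧ growthFn (φs n) p < growthFn φ p) :
    ∃ q S', GrowthDiffers φ φs q S' ∧ S' ⊆ S ∧ ∀ n ∈ S',
      ‖p.1 - q.1‖ = minGrowth (φs n) φ p ∧ minGrowth (φs n) φ q < minGrowth (φs n) φ p := by
  have hstop : ∀ n ∈ S, IsStopNbr (φs n) (growthFn (φs n)) p (hc (φs n) p) :=
    fun n hn => (hN n).isStopNbr_hc (hpS n hn).1
  have key : ∀ n ∈ S, growthFn φ (hc (φs n) p) < growthFn (φs n) (hc (φs n) p) ∧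
      ‖p.1 - (hc (φs n) p).1‖ = minGrowth (φs n) φ p ∧
      minGrowth (φs n) φ (hc (φs n) p) < minGrowth (φs n) φ p := fun n hn =>
    (hN n).minGrowth_stopNbr_lt hφ (hpS n hn).1 hp (hsub n (hstop n hn).1) (hstop n hn)
      (hpS n hn).2
  -- the stopping neighbours `hc (φs n) p` stay in a bounded, hence finite, part of `φ`
  set F := {q ∈ φ | ‖q.1‖ ≤ ‖p.1‖ + (growthFn φ p).toReal}
  have hF : ∀ n ∈ S, hc (φs n) p ∈ F := fun n hn => by
    refine ⟨hsub n (hstop n hn).1, (norm_le_norm_add_norm_sub p.1 _).trans ?_⟩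
    rw [(key n hn).2.1]
    exact (add_le_add_iff_left _).mpr
      (ENNReal.toReal_mono (hφ.2.2.2 p hp) (min_le_right _ _))
  have hfreq : ∃ᶠ n in atTop, ∃ w ∈ F, n ∈ S ∧ hc (φs n) p = w :=
    hS.mono fun n hn => ⟨_, hF n hn, hn, rfl⟩
  obtain ⟨w, hwF, hw⟩ := (frequently_exists_finite (hφ.2.1.1 _)).mp hfreq
  refine ⟨w, {n | n ∈ S ∧ hc (φs n) p = w}, ⟨hwF.1, hw, ?_⟩, fun n hn => hn.1, ?_⟩
  · rintro n ⟨hn, rfl⟩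
    exact ⟨(hstop n hn).1, (key n hn).1.ne'⟩
  · rintro n ⟨hn, rfl⟩
    exact (key n hn).2

lemma exists_growthDiffers_of_frequently_gt (hφ : Nprime φ) (hN : ∀ n, Nprime (φs n))
    (hev : ∀ y ∈ φ, ∀ᶠ n in atTop, y ∈ φs n) {p : Pt} (hp : p ∈ φ) {S : Set ℕ}
    (hS : ∃ᶠ n in atTop, n ∈ S)
    (hpS : ∀ n ∈ S, p ∈ φs n ∧ growthFn φ p < growthFn (φs n) p) :
    ∃ q S', GrowthDiffers φ φs q S' ∧ S' ⊆ S ∧ ∀ n ∈ S',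
      ‖p.1 - q.1‖ = minGrowth (φs n) φ p ∧ minGrowth (φs n) φ q < minGrowth (φs n) φ p := by
  have hy := hφ.isStopNbr_hc hp
  have key : ∀ n ∈ S, hc φ p ∈ φs n → growthFn (φs n) (hc φ p) < growthFn φ (hc φ p) ∧
      ‖p.1 - (hc φ p).1‖ = minGrowth φ (φs n) p ∧
      minGrowth φ (φs n) (hc φ p) < minGrowth φ (φs n) p := fun n hn hyn =>
    hφ.minGrowth_stopNbr_lt (hN n) hp (hpS n hn).1 hyn hy (hpS n hn).2
  refine ⟨hc φ p, {n | n ∈ S ∧ hc φ p ∈ φs n},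
    ⟨hy.1, hS.and_eventually (hev _ hy.1), fun n hn => ?_⟩, fun n hn => hn.1, fun n hn => ?_⟩
  · exact ⟨hn.2, (key n hn.1 hn.2).1.ne⟩
  · rw [minGrowth_comm, minGrowth_comm _ _ (hc φ p)]
    exact (key n hn.1 hn.2).2

lemma GrowthDiffers.exists_next (hφ : Nprime φ) (hN : ∀ n, Nprime (φs n))
    (hsub : ∀ n, φs n ⊆ φ) (hev : ∀ y ∈ φ, ∀ᶠ n in atTop, y ∈ φs n) {p : Pt} {S : Set ℕ}
    (h : GrowthDiffers φ φs p S) :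
    ∃ q S', GrowthDiffers φ φs q S' ∧ S' ⊆ S ∧ ∀ n ∈ S',
      ‖p.1 - q.1‖ = minGrowth (φs n) φ p ∧ minGrowth (φs n) φ q < minGrowth (φs n) φ p := by
  obtain ⟨hp, hS, hpS⟩ := h
  have hsplit : ∃ᶠ n in atTop, n ∈ {n | n ∈ S ∧ growthFn (φs n) p < growthFn φ p} ∨
      n ∈ {n | n ∈ S ∧ growthFn φ p < growthFn (φs n) p} :=
    hS.mono fun n hn => (hpS n hn).2.lt_or_gt.imp (⟨hn, ·⟩) (⟨hn, ·⟩)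
  rcases frequently_or_distrib.mp hsplit with hlt | hgt
  · obtain ⟨q, S', hq, hS', hdesc⟩ := exists_growthDiffers_of_frequently_lt hφ hN hsub hp hlt
      fun n hn => ⟨(hpS n hn.1).1, hn.2⟩
    exact ⟨q, S', hq, hS'.trans (Set.sep_subset _ _), hdesc⟩
  · obtain ⟨q, S', hq, hS', hdesc⟩ := exists_growthDiffers_of_frequently_gt hφ hN hev hp hgt
      fun n hn => ⟨(hpS n hn.1).1, hn.2⟩
    exact ⟨q, S', hq, hS'.trans (Set.sep_subset _ _), hdesc⟩

lemma not_growthDiffers (hφ : Nprime φ) (hN : ∀ n, Nprime (φs n)) (hsub : ∀ n, φs n ⊆ φ)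
    (hev : ∀ y ∈ φ, ∀ᶠ n in atTop, y ∈ φs n) (p : Pt) (S : Set ℕ) :
    ¬ GrowthDiffers φ φs p S := by
  intro h
  choose! q S' hq hS' hdesc using
    fun p S (h : GrowthDiffers φ φs p S) => h.exists_next hφ hN hsub hev
  set u : ℕ → Pt × Set ℕ := fun i => (fun v => (q v.1 v.2, S' v.1 v.2))^[i] (p, S)
  have hu_succ : ∀ i, u (i + 1) = (q (u i).1 (u i).2, S' (u i).1 (u i).2) := fun i =>
    Function.iterate_succ_apply' _ i _
  have hu : ∀ i, GrowthDiffers φ φs (u i).1 (u i).2 := by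
    intro i
    induction i with
    | zero => exact h
    | succ i ih => rw [hu_succ]; exact hq _ _ ih
  refine hφ.2.1.2.2.1 (hasInfDescChain_pos_of_nested_scales (σ := fun n => minGrowth (φs n) φ)
    hφ.injOn_fst (fun i => (hu i).1) (fun i => (hu i).2.1.exists) fun i => ?_)
  rw [hu_succ]
  exact ⟨hS' _ _ (hu i), hdesc _ _ (hu i)⟩

lemma eventually_growthFn_eq (hφ : Nprime φ) (hN : ∀ n, Nprime (φs n))
    (hsub : ∀ n, φs n ⊆ φ) (hev : ∀ y ∈ φ, ∀ᶠ n in atTop, y ∈ φs n) {z : Pt} (hz : z ∈ φ) :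
    ∀ᶠ n in atTop, z ∈ φs n ∧ growthFn (φs n) z = growthFn φ z := by
  by_contra h
  refine not_growthDiffers hφ hN hsub hev z {n | z ∈ φs n ∧ growthFn (φs n) z ≠ growthFn φ z}
    ⟨hz, ((not_eventually.mp h).and_eventually (hev z hz)).mono fun n hn => ?_, fun n hn => hn⟩
  exact ⟨hn.2, fun heq => hn.1 ⟨hn.2, heq⟩⟩

end Approximation

/-- Corollary: stabilization of the combinatorial descendant.
Let `φ ∈ N′`, `x ∈ φ`, and let `φ₁ ⊆ φ₂ ⊆ ⋯` be an increasing sequence in `N′` with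
`⋃_n φ_n = φ`.  Then there exists `n₀` such that for all `n ≥ n₀` one has `x ∈ φ_n`
and `h_c(φ_n, x) = h_c(φ, x)`. -/
theorem hc_stabilizes (φ : Set Pt) (hφ : Nprime φ) (x : Pt) (hx : x ∈ φ)
    (φs : ℕ → Set Pt) (hmono : ∀ n, φs n ⊆ φs (n + 1)) (hN : ∀ n, Nprime (φs n))
    (hUnion : (⋃ n, φs n) = φ) :
    ∃ n₀ : ℕ, ∀ n ≥ n₀, x ∈ φs n ∧ hc (φs n) x = hc φ x := by
  have hsub : ∀ n, φs n ⊆ φ := fun n => hUnion ▸ Set.subset_iUnion φs n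
  have hev : ∀ y ∈ φ, ∀ᶠ n in atTop, y ∈ φs n := fun y hy =>
    eventually_mem_of_mem_iUnion (monotone_nat_of_le_succ hmono) (hUnion ▸ hy)
  have hy := hφ.isStopNbr_hc hx
  obtain ⟨n₀, hn₀⟩ := eventually_atTop.mp ((eventually_growthFn_eq hφ hN hsub hev hx).and
    (eventually_growthFn_eq hφ hN hsub hev hy.1))
  refine ⟨n₀, fun n hn => ?_⟩
  obtain ⟨⟨hxn, hfx⟩, hyn, hfy⟩ := hn₀ n hn
  exact ⟨hxn, (hN n).hc_eq_of_isStopNbr hxn (hy.congr hyn hfx hfy)⟩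

end Lilypond
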